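/- Suppose parallel trends with respect to the never-treated group holds in post-treatment periods: for all g ∈ {2, …, 𝒯}, all t with g ≤ t ≤ 𝒯, and all d ∈ 𝒟₊, E[Y_t(0) − Y_{t−1}(0) | G = g, D = d] = E[Y_t(0) − Y_{t−1}(0) | D = 0]. Then for every g ∈ {2, …, 𝒯}, every t with g ≤ t ≤ 𝒯, and every d ∈ 𝒟₊: ATT(g, t, d | g, d) = E[Y_t − Y_{g−1} | G = g, D = d] − E[Y_t − Y_{g−1} | D = 0]. -/
import Mathlib


open MeasureTheory

/-- Conditional expectation of `X` given the event `A`: `E[X | A] = E[X·1_A] / P(A)`. -/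
noncomputable def cExp {Ω : Type*} [MeasurableSpace Ω] (P : Measure Ω)
    (X : Ω → ℝ) (A : Set Ω) : ℝ :=
  (∫ ω in A, X ω ∂P) / (P A).toReal

lemma cExp_sub {Ω : Type*} [MeasurableSpace Ω] (P : Measure Ω)
    (f h : Ω → ℝ) (A : Set Ω) (hf : Integrable f P) (hh : Integrable h P) :
    cExp P (fun ω => f ω - h ω) A = cExp P f A - cExp P h A := by
  unfold cExp
  rw [integral_sub hf.restrict hh.restrict, sub_div]

lemma cExp_congr {Ω : Type*} [MeasurableSpace Ω] (P : Measure Ω)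
    (f h : Ω → ℝ) (A : Set Ω) (hA : MeasurableSet A) (hfh : ∀ ω ∈ A, f ω = h ω) :
    cExp P f A = cExp P h A := by
  unfold cExp
  congr 1
  exact setIntegral_congr_fun hA hfh

/-- Under parallel trends with respect to the never-treated group in
post-treatment periods, for every group `g ∈ {2,…,T}`, period `t` with `g ≤ t ≤ T`,
and dose `d ∈ 𝒟₊`, the group-time ATT is identified by comparison with the
never-treated group:
`ATT(g,t,d|g,d) = E[Y_t − Y_{g−1} | G = g, D = d] − E[Y_t − Y_{g−1} | D = 0]`. -/
theorem att_gtd_identified_never_treated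
    {Ω : Type*} [MeasurableSpace Ω] (P : Measure Ω) [IsProbabilityMeasure P]
    (T : ℕ) (hT : 2 ≤ T)
    (Dpos : Finset ℝ) (hDposNe : Dpos.Nonempty) (hDposPos : ∀ d ∈ Dpos, (0 : ℝ) < d)
    (D : Ω → ℝ) (hD : Measurable D)
    (G : Ω → ℕ) (hG : Measurable G)
    (hGrange : ∀ ω, 2 ≤ G ω ∧ G ω ≤ T + 1)
    (hDval : ∀ ω, D ω = 0 ∨ D ω ∈ Dpos)
    (hD0G : ∀ ω, D ω = 0 ↔ G ω = T + 1)
    (hpNever : 0 < P {ω | G ω = T + 1})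
    (hpgd : ∀ g : ℕ, 2 ≤ g → g ≤ T → ∀ d ∈ Dpos, 0 < P {ω | G ω = g ∧ D ω = d})
    (Y0 : ℕ → Ω → ℝ) (hY0m : ∀ t, Measurable (Y0 t)) (hY0i : ∀ t, Integrable (Y0 t) P)
    (Ypo : ℕ → ℕ → ℝ → Ω → ℝ)
    (hYpom : ∀ t g dd, Measurable (Ypo t g dd)) (hYpoi : ∀ t g dd, Integrable (Ypo t g dd) P)
    (hNoAnt : ∀ t g : ℕ, ∀ dd ∈ Dpos, 2 ≤ g → g ≤ T → t < g → Ypo t g dd = Y0 t)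
    (Y : ℕ → Ω → ℝ)
    (hYobs : ∀ t ω, Y t ω = if t < G ω then Y0 t ω else Ypo t (G ω) (D ω) ω)
    (hPT : ∀ g : ℕ, 2 ≤ g → g ≤ T → ∀ t : ℕ, g ≤ t → t ≤ T → ∀ dd ∈ Dpos,
      cExp P (fun ω => Y0 t ω - Y0 (t - 1) ω) {ω | G ω = g ∧ D ω = dd} =
        cExp P (fun ω => Y0 t ω - Y0 (t - 1) ω) {ω | D ω = 0}) :
    ∀ g : ℕ, 2 ≤ g → g ≤ T → ∀ t : ℕ, g ≤ t → t ≤ T → ∀ dd ∈ Dpos,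
      cExp P (fun ω => Ypo t g dd ω - Y0 t ω) {ω | G ω = g ∧ D ω = dd} =
        cExp P (fun ω => Y t ω - Y (g - 1) ω) {ω | G ω = g ∧ D ω = dd} -
          cExp P (fun ω => Y t ω - Y (g - 1) ω) {ω | D ω = 0} := by
  intro g hg2 hgT t hgt htT dd hdd
  set A : Set Ω := {ω | G ω = g ∧ D ω = dd} with hAdef
  set B : Set Ω := {ω | D ω = 0} with hBdef
  have hA : MeasurableSet A :=
    (hG (measurableSet_singleton g)).inter (hD (measurableSet_singleton dd))
  have hB : MeasurableSet B := hD (measurableSet_singleton 0)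
  -- telescoping via parallel trends
  have tel : ∀ s, g - 1 ≤ s → s ≤ T →
      cExp P (Y0 s) A - cExp P (Y0 (g-1)) A = cExp P (Y0 s) B - cExp P (Y0 (g-1)) B := by
    intro s hs
    induction s, hs using Nat.le_induction with
    | base => intro _; ring
    | succ s hs ih =>
      intro hsT
      have hPT' := hPT g hg2 hgT (s+1) (by omega) hsT dd hdd
      simp only [Nat.add_sub_cancel] at hPT'
      rw [cExp_sub P (Y0 (s+1)) (Y0 s) A (hY0i _) (hY0i _),
        cExp_sub P (Y0 (s+1)) (Y0 s) B (hY0i _) (hY0i _)] at hPT'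
      have h2 := ih (by omega)
      linarith
  have e1 : cExp P (fun ω => Ypo t g dd ω - Y0 t ω) A
      = cExp P (Ypo t g dd) A - cExp P (Y0 t) A :=
    cExp_sub P _ _ A (hYpoi _ _ _) (hY0i _)
  have e2 : cExp P (fun ω => Y t ω - Y (g-1) ω) A
      = cExp P (Ypo t g dd) A - cExp P (Y0 (g-1)) A := by
    rw [cExp_congr P (fun ω => Y t ω - Y (g-1) ω)
        (fun ω => Ypo t g dd ω - Y0 (g-1) ω) A hA ?_]
    · exact cExp_sub P _ _ A (hYpoi _ _ _) (hY0i _)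
    · intro ω hω
      obtain ⟨hGω, hDω⟩ := hω
      show Y t ω - Y (g-1) ω = Ypo t g dd ω - Y0 (g-1) ω
      rw [hYobs t ω, hYobs (g-1) ω, hGω, hDω, if_neg (by omega), if_pos (by omega)]
  have e3 : cExp P (fun ω => Y t ω - Y (g-1) ω) B
      = cExp P (Y0 t) B - cExp P (Y0 (g-1)) B := by
    rw [cExp_congr P (fun ω => Y t ω - Y (g-1) ω)
        (fun ω => Y0 t ω - Y0 (g-1) ω) B hB ?_]
    · exact cExp_sub P _ _ B (hY0i _) (hY0i _)
    · intro ω hω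
      have hGω : G ω = T + 1 := (hD0G ω).mp hω
      show Y t ω - Y (g-1) ω = Y0 t ω - Y0 (g-1) ω
      rw [hYobs t ω, hYobs (g-1) ω, if_pos (by omega), if_pos (by omega)]
  have tel' := tel t (by omega) htT
  rw [e1, e2, e3]
  linarith
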